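/- Let n ≥ 1, let N = {1,...,n}, let P be a probability density on the subsets of N satisfying NID with level probabilities δ_t = ∑_{|T|=t} P_T, let v : 2^N → ℝ be a payoff function, and let i ∈ N. Then the expected Shapley value of i over the random restricted games satisfies ∑_{Z⊆N} P_Z · Ψ_i[v_Z] = ∑_{T ⊆ N∖{i}} (|T|!·(n−|T|−1)!/n!) · (v(T∪{i}) − v(T)) · (∑_{z=|T|+1}^{n} δ_z). -/

import Mathlib

open Finset

lemma key (m : ℕ) : ∀ s d : ℕ,
    ∑ r ∈ Finset.range (m+1), (m.choose r : ℝ) * (Nat.factorial (s+r)) * (Nat.factorial ((m-r)+d))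
      = (Nat.factorial (s+m+d+1)) * (Nat.factorial s) * (Nat.factorial d) / (Nat.factorial (s+d+1)) := by
  induction m with
  | zero =>
    intro s d
    have h : (Nat.factorial (s+d+1) : ℝ) ≠ 0 := by positivity
    rw [Finset.sum_range_one, eq_div_iff h]
    simp only [Nat.choose_self, Nat.cast_one, one_mul, Nat.add_zero, Nat.sub_zero, Nat.zero_add,
      Nat.zero_sub]
    push_cast
    ring
  | succ m ih =>
    intro s d
    have peel : ∑ r ∈ Finset.range (m+2), ((m+1).choose r : ℝ) * (Nat.factorial (s+r)) * (Nat.factorial ((m+1-r)+d))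
        = (∑ r ∈ Finset.range (m+1), ((m+1).choose (r+1) : ℝ) * (Nat.factorial (s+(r+1))) * (Nat.factorial ((m-r)+d)))
          + (Nat.factorial s) * (Nat.factorial ((m+1)+d)) := by
      rw [Finset.sum_range_succ']
      congr 1
      · apply Finset.sum_congr rfl
        intro r hr
        simp only [Finset.mem_range] at hr
        have h : (m+1-(r+1))+d = (m-r)+d := by omega
        rw [h]
      · simp
    rw [peel]
    have e1 : ∑ r ∈ Finset.range (m+1), ((m+1).choose (r+1) : ℝ) * (Nat.factorial (s+(r+1))) * (Nat.factorial ((m-r)+d))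
        = (∑ r ∈ Finset.range (m+1), (m.choose r : ℝ) * (Nat.factorial ((s+1)+r)) * (Nat.factorial ((m-r)+d)))
          + ∑ r ∈ Finset.range (m+1), (m.choose (r+1) : ℝ) * (Nat.factorial (s+(r+1))) * (Nat.factorial ((m-r)+d)) := by
      rw [← Finset.sum_add_distrib]
      apply Finset.sum_congr rfl
      intro r hr
      rw [Nat.choose_succ_succ]
      have h : s + (r+1) = (s+1) + r := by omega
      rw [h]
      push_cast
      ring
    rw [e1, ih (s+1) d]
    have e2 : (∑ r ∈ Finset.range (m+1), (m.choose (r+1) : ℝ) * (Nat.factorial (s+(r+1))) * (Nat.factorial ((m-r)+d)))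
          + (Nat.factorial s) * (Nat.factorial ((m+1)+d))
        = ∑ r ∈ Finset.range (m+1), (m.choose r : ℝ) * (Nat.factorial (s+r)) * (Nat.factorial ((m-r)+(d+1))) := by
      rw [Finset.sum_range_succ' (fun r => (m.choose r : ℝ) * (Nat.factorial (s+r)) * (Nat.factorial ((m-r)+(d+1))))]
      congr 1
      · rw [Finset.sum_range_succ]
        simp only [Nat.choose_succ_self, Nat.cast_zero, zero_mul, add_zero]
        apply Finset.sum_congr rfl
        intro r hr
        simp only [Finset.mem_range] at hr
        have h : (m-(r+1))+(d+1) = (m-r)+d := by omega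
        rw [h]
      · have h : (m-0)+(d+1) = (m+1)+d := by omega
        rw [h]
        simp
    rw [add_assoc, e2, ih s (d+1)]
    have hfd : (Nat.factorial (d+1) : ℝ) = (d+1) * Nat.factorial d := by
      rw [Nat.factorial_succ]; push_cast; ring
    have hfs : (Nat.factorial (s+1) : ℝ) = (s+1) * Nat.factorial s := by
      rw [Nat.factorial_succ]; push_cast; ring
    have h1 : s + 1 + m + d + 1 = s + m + (d+1) + 1 := by omega
    have h3 : s + (d+1) + 1 = (s+d+1) + 1 := by omega
    have h4 : s + 1 + d + 1 = (s+d+1) + 1 := by omega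
    have h2 : s + (m+1) + d + 1 = s + m + (d+1) + 1 := by omega
    rw [h1, h3, h4, h2, hfd, hfs]
    have hh : (Nat.factorial ((s+d+1)+1) : ℝ) = ((s:ℝ)+d+2) * Nat.factorial (s+d+1) := by
      rw [Nat.factorial_succ]; push_cast; ring
    rw [hh]
    have hne : (Nat.factorial (s+d+1) : ℝ) ≠ 0 := by positivity
    have hne2 : ((s:ℝ)+d+2) ≠ 0 := by positivity
    field_simp
    ring

lemma sumPowersetCard {α : Type*} [DecidableEq α] (U : Finset α) (g : ℕ → ℝ) :
    ∑ R ∈ U.powerset, g R.card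
      = ∑ r ∈ Finset.range (U.card + 1), (U.card.choose r : ℝ) * g r := by
  rw [Finset.sum_powerset]
  apply Finset.sum_congr rfl
  intro r hr
  have h : ∀ R ∈ powersetCard r U, g R.card = g r := by
    intro R hR
    rw [(mem_powersetCard.1 hR).2]
  rw [Finset.sum_congr rfl h, Finset.sum_const, card_powersetCard, nsmul_eq_mul]

lemma reindexSup {α : Type*} [DecidableEq α] [Fintype α] (A : Finset α) (f : Finset α → ℝ) :
    ∑ Z ∈ univ.filter (fun Z => A ⊆ Z), f Z
      = ∑ R ∈ (univ \ A).powerset, f (A ∪ R) := by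
  apply Finset.sum_bij' (fun Z _ => Z \ A) (fun R _ => A ∪ R)
  · intro Z hZ
    exact mem_powerset.2 (sdiff_subset_sdiff (subset_univ Z) (le_refl A))
  · intro R hR
    simp
  · intro Z hZ
    simp only [mem_filter] at hZ
    exact union_sdiff_of_subset hZ.2
  · intro R hR
    simp only [mem_powerset] at hR
    rw [union_sdiff_cancel_left]
    exact disjoint_left.2 fun x hx hxR => (mem_sdiff.1 (hR hxR)).2 hx
  · intro Z hZ
    simp only [mem_filter] at hZ
    rw [union_sdiff_of_subset hZ.2]

lemma coeffId (n s r : ℕ) (h : s + 1 + r ≤ n) :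
    ((n-s-1).choose r : ℝ) *
        ((Nat.factorial s : ℝ) * (Nat.factorial r : ℝ) / (Nat.factorial (s+1+r) : ℝ))
        / ((n.choose (s+1+r) : ℝ))
      = ((Nat.factorial s * Nat.factorial (n - s - 1) : ℕ) : ℝ) / ((Nat.factorial n : ℕ) : ℝ) := by
  have e1 := Nat.choose_mul_factorial_mul_factorial (show r ≤ n-s-1 by omega)
  have e2 := Nat.choose_mul_factorial_mul_factorial h
  have h3 : n-s-1-r = n-(s+1+r) := by omega
  rw [h3] at e1
  have E1 : ((n-s-1).choose r : ℝ) * (Nat.factorial r) * (Nat.factorial (n-(s+1+r)))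
      = (Nat.factorial (n-s-1) : ℝ) := by exact_mod_cast e1
  have E2 : ((n.choose (s+1+r)) : ℝ) * (Nat.factorial (s+1+r)) * (Nat.factorial (n-(s+1+r)))
      = (Nat.factorial n : ℝ) := by exact_mod_cast e2
  have f1 : (Nat.factorial (s+1+r) : ℝ) ≠ 0 := by positivity
  have f2 : (Nat.factorial n : ℝ) ≠ 0 := by positivity
  have f3 : (Nat.factorial (n-(s+1+r)) : ℝ) ≠ 0 := by positivity
  have c1 : ((n.choose (s+1+r)) : ℝ) ≠ 0 := by
    have := Nat.choose_pos h; positivity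
  push_cast
  field_simp
  apply mul_right_cancel₀ f3
  linear_combination (Nat.factorial n : ℝ) * E1
    - (Nat.factorial (n-s-1) : ℝ) * E2

lemma fiberSum (n : ℕ) (i : Fin n) (Z S : Finset (Fin n)) (hiZ : i ∈ Z) (hS : S ⊆ Z.erase i) :
    ∑ T ∈ (((univ : Finset (Fin n)).erase i).powerset).filter (fun T => Z ∩ T = S),
      ((Nat.factorial T.card * Nat.factorial (n - T.card - 1) : ℕ) : ℝ) / ((Nat.factorial n : ℕ) : ℝ)
    = (Nat.factorial S.card : ℝ) * (Nat.factorial (Z.card - 1 - S.card)) / (Nat.factorial Z.card) := by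
  classical
  have hSZ : S ⊆ Z := hS.trans (erase_subset _ _)
  have hiS : i ∉ S := fun h => (mem_erase.1 (hS h)).1 rfl
  have hbij : ∑ T ∈ (((univ : Finset (Fin n)).erase i).powerset).filter (fun T => Z ∩ T = S),
      ((Nat.factorial T.card * Nat.factorial (n - T.card - 1) : ℕ) : ℝ) / ((Nat.factorial n : ℕ) : ℝ)
      = ∑ R ∈ (((univ : Finset (Fin n)).erase i) \ Z).powerset,
      ((Nat.factorial (S.card + R.card) * Nat.factorial (n - (S.card + R.card) - 1) : ℕ) : ℝ)
        / ((Nat.factorial n : ℕ) : ℝ) := by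
    apply Finset.sum_bij' (fun T _ => T \ Z) (fun R _ => S ∪ R)
    · intro T hT
      simp only [mem_filter, mem_powerset] at hT
      exact mem_powerset.2 (sdiff_subset_sdiff hT.1 (le_refl Z))
    · intro R hR
      simp only [mem_powerset] at hR
      have hRZ : Disjoint Z R := disjoint_right.2 fun x hx hxZ => (mem_sdiff.1 (hR hx)).2 hxZ
      refine mem_filter.2 ⟨mem_powerset.2 ?_, ?_⟩
      · exact union_subset (hS.trans (erase_subset_erase _ (subset_univ Z))) (hR.trans sdiff_subset)
      · rw [inter_union_distrib_left, (inter_eq_right.2 hSZ : Z ∩ S = S),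
          disjoint_iff_inter_eq_empty.1 hRZ, union_empty]
    · intro T hT
      simp only [mem_filter] at hT
      rw [← hT.2]
      ext x
      simp only [mem_union, mem_inter, mem_sdiff]
      tauto
    · intro R hR
      simp only [mem_powerset] at hR
      have hRZ : Disjoint R Z := disjoint_left.2 fun x hx hxZ => (mem_sdiff.1 (hR hx)).2 hxZ
      rw [union_sdiff_distrib, sdiff_eq_empty_iff_subset.2 hSZ, empty_union,
        sdiff_eq_self_of_disjoint hRZ]
    · intro T hT
      simp only [mem_filter] at hT
      have hc : T.card = S.card + (T \ Z).card := by
        rw [← hT.2, inter_comm]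
        exact (card_inter_add_card_sdiff T Z).symm
      rw [hc]
  rw [hbij, sumPowersetCard _ (fun r =>
      ((Nat.factorial (S.card + r) * Nat.factorial (n - (S.card + r) - 1) : ℕ) : ℝ)
        / ((Nat.factorial n : ℕ) : ℝ))]
  have hZn : Z.card ≤ n := by
    simpa using card_le_univ Z
  have hZ1 : 1 ≤ Z.card := card_pos.2 ⟨i, hiZ⟩
  have hScard : S.card ≤ Z.card - 1 := by
    have := card_le_card hS
    rwa [card_erase_of_mem hiZ] at this
  have hu : (((univ : Finset (Fin n)).erase i) \ Z).card = n - Z.card := by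
    have h1 : ((univ : Finset (Fin n)).erase i ∩ Z) = Z.erase i := by
      ext x; simp [mem_erase, and_comm]
    have h2 := card_inter_add_card_sdiff ((univ : Finset (Fin n)).erase i) Z
    rw [h1, card_erase_of_mem hiZ, card_erase_of_mem (mem_univ i), card_univ,
      Fintype.card_fin] at h2
    omega
  rw [hu]
  have hterm : ∀ r ∈ Finset.range ((n - Z.card) + 1),
      ((n - Z.card).choose r : ℝ) *
        (((Nat.factorial (S.card + r) * Nat.factorial (n - (S.card + r) - 1) : ℕ) : ℝ)
          / ((Nat.factorial n : ℕ) : ℝ))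
      = ((n - Z.card).choose r : ℝ) * (Nat.factorial (S.card + r))
          * (Nat.factorial (((n - Z.card) - r) + (Z.card - 1 - S.card)))
          / ((Nat.factorial n : ℕ) : ℝ) := by
    intro r hr
    simp only [Finset.mem_range] at hr
    have h3 : n - (S.card + r) - 1 = ((n - Z.card) - r) + (Z.card - 1 - S.card) := by omega
    rw [h3]
    push_cast
    ring
  rw [Finset.sum_congr rfl hterm]
  have hsum : ∑ r ∈ Finset.range ((n - Z.card) + 1),
      ((n - Z.card).choose r : ℝ) * (Nat.factorial (S.card + r))
        * (Nat.factorial (((n - Z.card) - r) + (Z.card - 1 - S.card)))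
        / ((Nat.factorial n : ℕ) : ℝ)
      = (∑ r ∈ Finset.range ((n - Z.card) + 1),
      ((n - Z.card).choose r : ℝ) * (Nat.factorial (S.card + r))
        * (Nat.factorial (((n - Z.card) - r) + (Z.card - 1 - S.card))))
        / ((Nat.factorial n : ℕ) : ℝ) := by
    rw [Finset.sum_div]
  rw [hsum, key]
  have h4 : S.card + (n - Z.card) + (Z.card - 1 - S.card) + 1 = n := by omega
  have h5 : S.card + (Z.card - 1 - S.card) + 1 = Z.card := by omega
  rw [h4, h5]
  have hne : ((Nat.factorial n : ℕ) : ℝ) ≠ 0 := by positivity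
  have hne2 : ((Nat.factorial Z.card : ℕ) : ℝ) ≠ 0 := by positivity
  field_simp

lemma coeffSum (n : ℕ) (P : Finset (Fin n) → ℝ) (δ : ℕ → ℝ)
    (hPδ : ∀ Z : Finset (Fin n), P Z = δ Z.card / (n.choose Z.card : ℝ))
    (i : Fin n) (S : Finset (Fin n)) (hS : S ⊆ (univ : Finset (Fin n)).erase i) :
    ∑ Z ∈ (univ : Finset (Finset (Fin n))).filter (fun Z => insert i S ⊆ Z),
        P Z * ((Nat.factorial S.card : ℝ) * (Nat.factorial (Z.card - 1 - S.card))
          / (Nat.factorial Z.card))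
      = ((Nat.factorial S.card * Nat.factorial (n - S.card - 1) : ℕ) : ℝ)
          / ((Nat.factorial n : ℕ) : ℝ)
        * ∑ z ∈ Finset.Icc (S.card + 1) n, δ z := by
  classical
  have hiS : i ∉ S := (subset_erase.1 hS).2
  have hA : (insert i S).card = S.card + 1 := card_insert_of_notMem hiS
  have hsn : S.card + 1 ≤ n := by
    have h0 : (insert i S).card ≤ n := by simpa using card_le_univ (insert i S)
    omega
  rw [reindexSup]
  have hterm : ∀ R ∈ ((univ : Finset (Fin n)) \ insert i S).powerset,
      P (insert i S ∪ R) * ((Nat.factorial S.card : ℝ)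
          * (Nat.factorial ((insert i S ∪ R).card - 1 - S.card))
          / (Nat.factorial (insert i S ∪ R).card))
      = (fun r => δ (S.card+1+r) / (n.choose (S.card+1+r) : ℝ)
          * ((Nat.factorial S.card : ℝ) * (Nat.factorial r)
            / (Nat.factorial (S.card+1+r)))) R.card := by
    intro R hR
    simp only [mem_powerset] at hR
    have hdisj : Disjoint (insert i S) R :=
      disjoint_right.2 fun x hx hxA => (mem_sdiff.1 (hR hx)).2 hxA
    have hc : (insert i S ∪ R).card = S.card + 1 + R.card := by
      rw [card_union_of_disjoint hdisj, hA]
    rw [hc, hPδ, hc]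
    have h1 : S.card + 1 + R.card - 1 - S.card = R.card := by omega
    rw [h1]
  rw [Finset.sum_congr rfl hterm, sumPowersetCard _ (fun r => δ (S.card+1+r) / (n.choose (S.card+1+r) : ℝ)
          * ((Nat.factorial S.card : ℝ) * (Nat.factorial r)
            / (Nat.factorial (S.card+1+r))))]
  have hU : ((univ : Finset (Fin n)) \ insert i S).card = n - (S.card + 1) := by
    rw [card_sdiff_of_subset (subset_univ _), hA, card_univ, Fintype.card_fin]
  rw [hU]
  rw [← Finset.Ico_add_one_right_eq_Icc, Finset.sum_Ico_eq_sum_range]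
  have hrange : n - (S.card + 1) + 1 = n + 1 - (S.card + 1) := by omega
  rw [hrange, Finset.mul_sum,
    show n - (S.card + 1) = n - S.card - 1 from by omega]
  apply Finset.sum_congr rfl
  intro r hr
  simp only [Finset.mem_range] at hr
  have hzn : S.card + 1 + r ≤ n := by omega
  rw [← coeffId n S.card r hzn]
  ring

/-- The Shapley value of player `i` in the game `w` on the player set `N = {1,...,n}`:
`Ψ_i[w] = ∑_{T ⊆ N∖{i}} (|T|!(n−|T|−1)!/n!) (w(T∪{i}) − w(T))`. -/
noncomputable def Shapley (n : ℕ) (w : Finset (Fin n) → ℝ) (i : Fin n) : ℝ :=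
  ∑ T ∈ ((univ : Finset (Fin n)).erase i).powerset,
    ((Nat.factorial T.card * Nat.factorial (n - T.card - 1) : ℕ) : ℝ)
      / ((Nat.factorial n : ℕ) : ℝ) * (w (insert i T) - w T)

/-- For a probability density `P` on subsets of `N = {1,...,n}` satisfying
NID, with level probabilities `δ_t = ∑_{|T|=t} P_T`, the expected Shapley value of `i`
over the random restricted games `v_Z(T) = v(Z ∩ T)` satisfies
`∑_{Z⊆N} P_Z Ψ_i[v_Z] = ∑_{T ⊆ N∖{i}} (|T|!(n−|T|−1)!/n!)(v(T∪{i}) − v(T)) ∑_{z=|T|+1}^n δ_z`. -/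
theorem stmt14 (n : ℕ) (hn : 1 ≤ n) (P : Finset (Fin n) → ℝ)
    (hP0 : ∀ T : Finset (Fin n), 0 ≤ P T)
    (hP1 : ∑ T : Finset (Fin n), P T = 1)
    (hNID : ∀ T Z : Finset (Fin n), T.card = Z.card → P T = P Z)
    (δ : ℕ → ℝ)
    (hδ : ∀ t : ℕ,
      δ t = ∑ T ∈ (univ : Finset (Finset (Fin n))).filter (fun T => T.card = t), P T)
    (v : Finset (Fin n) → ℝ) (i : Fin n) :
    ∑ Z : Finset (Fin n), P Z * Shapley n (fun T => v (Z ∩ T)) i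
      = ∑ T ∈ ((univ : Finset (Fin n)).erase i).powerset,
          ((Nat.factorial T.card * Nat.factorial (n - T.card - 1) : ℕ) : ℝ)
              / ((Nat.factorial n : ℕ) : ℝ) * (v (insert i T) - v T) *
            (∑ z ∈ Finset.Icc (T.card + 1) n, δ z) := by
  classical
  -- P is determined by δ
  have hPδ : ∀ Z : Finset (Fin n), P Z = δ Z.card / (n.choose Z.card : ℝ) := by
    intro Z
    have hz : Z.card ≤ n := by simpa using card_le_univ Z
    have hpos : 0 < n.choose Z.card := Nat.choose_pos hz
    have hfilter : (univ : Finset (Finset (Fin n))).filter (fun T => T.card = Z.card)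
        = powersetCard Z.card univ := by
      ext T; simp [mem_powersetCard]
    have hδZ : δ Z.card = (n.choose Z.card : ℝ) * P Z := by
      rw [hδ]
      rw [Finset.sum_congr rfl (fun T hT => hNID T Z (mem_filter.1 hT).2)]
      rw [Finset.sum_const, hfilter, card_powersetCard, card_univ, Fintype.card_fin,
        nsmul_eq_mul]
    rw [hδZ]
    field_simp
  -- split off Z not containing i
  have hzero : ∀ Z : Finset (Fin n), i ∉ Z → Shapley n (fun T => v (Z ∩ T)) i = 0 := by
    intro Z hi
    unfold Shapley
    apply Finset.sum_eq_zero
    intro T hT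
    simp [inter_insert_of_notMem hi]
  rw [← Finset.sum_filter_add_sum_filter_not univ (fun Z => i ∈ Z)
    (fun Z => P Z * Shapley n (fun T => v (Z ∩ T)) i)]
  have h2 : ∑ Z ∈ univ.filter (fun Z => ¬ i ∈ Z), P Z * Shapley n (fun T => v (Z ∩ T)) i
      = 0 := by
    apply Finset.sum_eq_zero
    intro Z hZ
    rw [hzero Z (mem_filter.1 hZ).2, mul_zero]
  rw [h2, add_zero]
  -- rewrite inner Shapley as a sum over S ⊆ Z.erase i
  have hstep : ∀ Z ∈ univ.filter (fun Z => i ∈ Z),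
      P Z * Shapley n (fun T => v (Z ∩ T)) i
      = ∑ S ∈ (Z.erase i).powerset,
          (P Z * (v (insert i S) - v S)) *
            ((Nat.factorial S.card : ℝ) * (Nat.factorial (Z.card - 1 - S.card))
              / (Nat.factorial Z.card)) := by
    intro Z hZ
    have hiZ : i ∈ Z := (mem_filter.1 hZ).2
    unfold Shapley
    rw [Finset.mul_sum]
    have hmaps : ∀ T ∈ ((univ : Finset (Fin n)).erase i).powerset,
        Z ∩ T ∈ (Z.erase i).powerset := by
      intro T hT
      refine mem_powerset.2 (fun x hx => ?_)
      have hx' := mem_inter.1 hx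
      exact mem_erase.2 ⟨fun h => (mem_erase.1 (mem_powerset.1 hT hx'.2)).1 (h ▸ rfl), hx'.1⟩
    rw [← Finset.sum_fiberwise_of_maps_to hmaps
      (fun T => P Z * (((Nat.factorial T.card * Nat.factorial (n - T.card - 1) : ℕ) : ℝ)
        / ((Nat.factorial n : ℕ) : ℝ) * (v (Z ∩ insert i T) - v (Z ∩ T))))]
    apply Finset.sum_congr rfl
    intro S hS
    have hSsub : S ⊆ Z.erase i := mem_powerset.1 hS
    have hcongr : ∀ T ∈ (((univ : Finset (Fin n)).erase i).powerset).filter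
        (fun T => Z ∩ T = S),
        P Z * (((Nat.factorial T.card * Nat.factorial (n - T.card - 1) : ℕ) : ℝ)
          / ((Nat.factorial n : ℕ) : ℝ) * (v (Z ∩ insert i T) - v (Z ∩ T)))
        = (P Z * (v (insert i S) - v S)) *
            (((Nat.factorial T.card * Nat.factorial (n - T.card - 1) : ℕ) : ℝ)
              / ((Nat.factorial n : ℕ) : ℝ)) := by
      intro T hT
      obtain ⟨hT1, hT2⟩ := mem_filter.1 hT
      rw [inter_insert_of_mem hiZ, hT2]
      ring
    rw [Finset.sum_congr rfl hcongr, ← Finset.mul_sum, fiberSum n i Z S hiZ hSsub]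
  rw [Finset.sum_congr rfl hstep]
  -- swap the order of summation
  rw [Finset.sum_comm' (s := univ.filter (fun Z => i ∈ Z))
    (t := fun Z => (Z.erase i).powerset)
    (t' := ((univ : Finset (Fin n)).erase i).powerset)
    (s' := fun S => (univ : Finset (Finset (Fin n))).filter (fun Z => insert i S ⊆ Z))
    (by
      intro Z S
      simp only [mem_filter, mem_univ, true_and, mem_powerset, subset_erase,
        insert_subset_iff, subset_univ, and_true]
      tauto)]
  -- evaluate the inner sum for each S
  apply Finset.sum_congr rfl
  intro S hS
  have hSsub : S ⊆ (univ : Finset (Fin n)).erase i := mem_powerset.1 hS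
  have hfact : ∀ Z ∈ (univ : Finset (Finset (Fin n))).filter (fun Z => insert i S ⊆ Z),
      (P Z * (v (insert i S) - v S)) *
        ((Nat.factorial S.card : ℝ) * (Nat.factorial (Z.card - 1 - S.card))
          / (Nat.factorial Z.card))
      = (v (insert i S) - v S) *
        (P Z * ((Nat.factorial S.card : ℝ) * (Nat.factorial (Z.card - 1 - S.card))
          / (Nat.factorial Z.card))) := by
    intro Z hZ
    ring
  rw [Finset.sum_congr rfl hfact, ← Finset.mul_sum,
    coeffSum n P δ hPδ i S hSsub]
  ring
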